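/- Let σ be a state and let q be an integer with 0 ≤ q < ch(σ). Then there is no winning strategy for σ of size q; in particular, starting from state σ, Questioner cannot determine Responder's secret number with only q questions, whatever subsets of U the questions are. -/

import Mathlib

open scoped Classical

noncomputable section

namespace UlamRenyi

/-- A state of the Ulam–Rényi game with 3 lies over a universe of size `u`:
a function `U → {0,1,2,3,4}`. -/
abbrev State (u : ℕ) := Fin u → Fin 5

variable {u : ℕ}

/-- The set of elements lying on level `i` of the state `σ`. -/
def levelSet (σ : State u) (i : ℕ) : Set (Fin u) := {y | (σ y : ℕ) = i}

/-- The support of a state: the elements at level `≤ 3`. -/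
def support (σ : State u) : Set (Fin u) := {y | (σ y : ℕ) ≤ 3}

/-- A state is final if its support has at most one element. -/
def IsFinal (σ : State u) : Prop := (support σ).Subsingleton

/-- `stCount σ i = |σ⁻¹(i)|`. -/
def stCount (σ : State u) (i : ℕ) : ℕ := (levelSet σ i).ncard

/-- The type of a state: `(t₀, t₁, t₂, t₃)` with `tᵢ = |σ⁻¹(i)|`. -/
def stType (σ : State u) : ℕ × ℕ × ℕ × ℕ :=
  (stCount σ 0, stCount σ 1, stCount σ 2, stCount σ 3)

/-- The state resulting from the answer *yes* to question `Q` in state `σ`: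
`σ_yes(y) = min (σ(y) + 1_{y ∉ Q}, 4)`. -/
def yesState (σ : State u) (Q : Set (Fin u)) : State u := fun y =>
  ⟨min ((σ y : ℕ) + (if y ∈ Q then 0 else 1)) 4,
    Nat.lt_succ_of_le (Nat.min_le_right _ _)⟩

/-- The state resulting from the answer *no* to question `Q` in state `σ`:
`σ_no(y) = min (σ(y) + 1_{y ∈ Q}, 4)`. -/
def noState (σ : State u) (Q : Set (Fin u)) : State u := fun y =>
  ⟨min ((σ y : ℕ) + (if y ∈ Q then 1 else 0)) 4,
    Nat.lt_succ_of_le (Nat.min_le_right _ _)⟩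

/-- The state resulting from answer `b` (`true` = yes, `false` = no). -/
def ansState (σ : State u) (Q : Set (Fin u)) : Bool → State u
  | true => yesState σ Q
  | false => noState σ Q

/-- An interval of the universe: the empty set, or `[a,b] = {x | a ≤ x ≤ b}`. -/
def IsInterval (I : Set (Fin u)) : Prop :=
  I = ∅ ∨ ∃ a b : Fin u, I = Set.Icc a b

/-- A `k`-interval question: a union of at most `k` intervals. -/
def IsKIntervalQuestion (k : ℕ) (Q : Set (Fin u)) : Prop :=
  ∃ I : Fin k → Set (Fin u), (∀ t, IsInterval (I t)) ∧ Q = ⋃ t, I t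

/-- The type of a question with respect to a state: `aᵢ = |Q ∩ σ⁻¹(i)|`. -/
def qType (σ : State u) (Q : Set (Fin u)) (i : ℕ) : ℕ :=
  (Q ∩ levelSet σ i).ncard

/-- A strategy: a labelling of the nodes of the complete binary tree
(identified with finite lists of answers, `true` = yes) by questions. -/
abbrev Strategy (u : ℕ) := List Bool → Set (Fin u)

/-- The state reached from `σ` by playing strategy `S` along the answer sequence `bs`. -/
def play : State u → Strategy u → List Bool → State u
  | σ, _, [] => σ
  | σ, S, b :: bs => play (ansState σ (S []) b) (fun l => S (b :: l)) bs

/-- `S` is a winning strategy of size `q` for state `σ`: along every root-to-leaf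
path of length `q` the resulting state is final. -/
def IsWinning (σ : State u) (S : Strategy u) (q : ℕ) : Prop :=
  ∀ bs : List Bool, bs.length = q → IsFinal (play σ S bs)

/-- All the questions asked by `S` in a game of `q` rounds are `k`-interval questions. -/
def UsesKIntervals (S : Strategy u) (q k : ℕ) : Prop :=
  ∀ bs : List Bool, bs.length < q → IsKIntervalQuestion k (S bs)

/-- `binSum q e = ∑_{ℓ=0}^{e} C(q,ℓ)`. -/
def binSum (q e : ℕ) : ℕ := ∑ ℓ ∈ Finset.range (e + 1), Nat.choose q ℓ

/-- The `q`-th volume of a state: `w_q(σ) = ∑_{j=0}^{3} |σ⁻¹(j)| ∑_{ℓ=0}^{3-j} C(q,ℓ)`. -/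
def vol (σ : State u) (q : ℕ) : ℕ :=
  ∑ j ∈ Finset.range 4, stCount σ j * binSum q (3 - j)

/-- The character of a state: `ch(σ) = min {q : w_q(σ) ≤ 2^q}`. -/
def ch (σ : State u) : ℕ := sInf {q | vol σ q ≤ 2 ^ q}

/-- `N_min(2^m, 3) = min {q : 2^{q-m} ≥ ∑_{i=0}^{3} C(q,i)}`. -/
def Nmin (m : ℕ) : ℕ := sInf {q | 2 ^ m * binSum q 3 ≤ 2 ^ q}

/-- The initial, constant-0, state. -/
def initState (u : ℕ) : State u := fun _ => 0

/-- Cyclic successor of an index. -/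
def cSucc {r : ℕ} (i : Fin r) : Fin r := ⟨(i.val + 1) % r, Nat.mod_lt _ i.pos⟩

/-- Cyclic predecessor of an index. -/
def cPred {r : ℕ} (i : Fin r) : Fin r := ⟨(i.val + (r - 1)) % r, Nat.mod_lt _ i.pos⟩

/-- A cyclic list of (possibly empty) arcs representing the state `σ`:
the arcs are pairwise disjoint sets of cyclically consecutive elements of the
support, appearing around the circle in the order of their indices (with respect
to some base point of the circle), each arc lying on one level of `σ`, together
covering the support, and the levels of consecutive arcs differ by exactly 1. -/
structure ArcDecomp (σ : State u) (r : ℕ) where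
  /-- the level of each arc -/
  lvl : Fin r → ℕ
  /-- the arcs (possibly empty) -/
  arc : Fin r → Set (Fin u)
  /-- base point used to linearize the cyclic order -/
  base : Fin u
  lvl_le : ∀ i, lvl i ≤ 3
  arc_lvl : ∀ i, arc i ⊆ levelSet σ (lvl i)
  cover : ∀ y ∈ support σ, ∃! i, y ∈ arc i
  step : ∀ i : Fin r, lvl (cSucc i) = lvl i + 1 ∨ lvl i = lvl (cSucc i) + 1
  ordered : ∀ i j : Fin r, i < j → ∀ x ∈ arc i, ∀ y ∈ arc j, x - base < y - base

/-- The number of arcs of the decomposition lying on level `ℓ`. -/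
def arcCountAt {σ : State u} {r : ℕ} (d : ArcDecomp σ r) (ℓ : ℕ) : ℕ :=
  (Finset.univ.filter fun i => d.lvl i = ℓ).card

/-- The decomposition has exactly `2i+1` arcs on level `i` for `i = 0,1,2`, and
exactly `3` arcs on level `3`. -/
def GoodCounts {σ : State u} (d : ArcDecomp σ 12) : Prop :=
  arcCountAt d 0 = 1 ∧ arcCountAt d 1 = 3 ∧ arcCountAt d 2 = 5 ∧ arcCountAt d 3 = 3

/-- A state is well-shaped if its shortest cyclic arc decomposition has exactly
`2i+1` arcs on level `i` for `i = 0,1,2` and exactly `3` arcs on level `3`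
(hence length 12). -/
def IsWellShaped (σ : State u) : Prop :=
  (∀ r : ℕ, Nonempty (ArcDecomp σ r) → 12 ≤ r) ∧
  ∃ d : ArcDecomp σ 12, GoodCounts d

/-- A state of type `(t₀,t₁,t₂,t₃)` is 0-typical if `t₀ = 0`, `t₂ ≥ t₁ - 1`
and `t₃ ≥ ch(σ)`. -/
def IsZeroTypical (σ : State u) : Prop :=
  stCount σ 0 = 0 ∧ stCount σ 1 ≤ stCount σ 2 + 1 ∧ ch σ ≤ stCount σ 3

/-- A state is 4-interval nice if it is well shaped and admits a winning strategy
of size `ch(σ)` all of whose questions are 4-interval questions. -/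
def FourIntervalNice (σ : State u) : Prop :=
  IsWellShaped σ ∧
  ∃ S : Strategy u, IsWinning σ S (ch σ) ∧ UsesKIntervals S (ch σ) 4

end UlamRenyi

namespace UlamRenyi

/-- Pointwise weight function. -/
def wt (n q : ℕ) : ℕ := if n ≤ 3 then binSum q (3 - n) else 0

lemma binSum_zero (e : ℕ) : binSum 0 e = 1 := by
  induction e with
  | zero => simp [binSum]
  | succ e ih =>
    unfold binSum at *
    rw [Finset.sum_range_succ, ih, Nat.choose_eq_zero_of_lt (by omega)]

lemma binSum_succ (q e : ℕ) :
    binSum (q + 1) (e + 1) = binSum q (e + 1) + binSum q e := by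
  induction e with
  | zero => simp [binSum, Finset.sum_range_succ, Nat.choose]; omega
  | succ e ih =>
    show binSum (q+1) (e+2) = binSum q (e+2) + binSum q (e+1)
    have h1 : binSum (q+1) (e+2) = binSum (q+1) (e+1) + Nat.choose (q+1) (e+2) := by
      simp [binSum, Finset.sum_range_succ]
    have h2 : binSum q (e+2) = binSum q (e+1) + Nat.choose q (e+2) := by
      simp [binSum, Finset.sum_range_succ]
    have h3 : binSum q (e+1) = binSum q e + Nat.choose q (e+1) := by
      simp [binSum, Finset.sum_range_succ]
    have h4 : Nat.choose (q+1) (e+2) = Nat.choose q (e+1) + Nat.choose q (e+2) :=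
      Nat.choose_succ_succ _ _
    omega

lemma binSum_succ_zero (q : ℕ) : binSum (q + 1) 0 = binSum q 0 := by
  simp [binSum]

/-- key pointwise identity -/
lemma wt_key (n q : ℕ) (hn : n ≤ 4) :
    wt n (q + 1) = wt (min (n + 1) 4) q + wt n q := by
  have h0 := binSum_succ q 2
  have h1 := binSum_succ q 1
  have h2 := binSum_succ q 0
  have h3 := binSum_succ_zero q
  norm_num at h0 h1 h2
  interval_cases n <;> simp [wt] <;> omega

variable {u : ℕ}

lemma vol_eq_sum (σ : State u) (q : ℕ) :
    vol σ q = ∑ y : Fin u, wt (σ y : ℕ) q := by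
  unfold vol stCount
  have hls : ∀ j : ℕ, (levelSet σ j).ncard =
      (Finset.univ.filter fun y => (σ y : ℕ) = j).card := by
    intro j
    rw [show levelSet σ j = ↑(Finset.univ.filter fun y => (σ y : ℕ) = j) by
      ext y; simp [levelSet], Set.ncard_coe_finset]
  simp only [hls]
  have h1 : ∀ j ∈ Finset.range 4,
      (Finset.univ.filter fun y => (σ y : ℕ) = j).card * binSum q (3 - j)
      = ∑ y : Fin u, if (σ y : ℕ) = j then binSum q (3 - j) else 0 := by
    intro j _
    rw [← Finset.sum_filter, Finset.sum_const, smul_eq_mul]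
  rw [Finset.sum_congr rfl h1, Finset.sum_comm]
  refine Finset.sum_congr rfl fun y _ => ?_
  have h4 : (σ y : ℕ) < 5 := (σ y).isLt
  unfold wt
  rcases Nat.lt_or_ge (σ y : ℕ) 4 with h | h
  · rw [if_pos (by omega), Finset.sum_eq_single (σ y : ℕ)]
    · simp
    · intro b _ hb; simp [Ne.symm hb]
    · intro hmem; exact absurd (Finset.mem_range.mpr h) hmem
  · rw [if_neg (by omega)]
    refine Finset.sum_eq_zero fun j hj => ?_
    simp only [Finset.mem_range] at hj
    rw [if_neg (by omega)]

lemma vol_split (σ : State u) (Q : Set (Fin u)) (q : ℕ) :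
    vol σ (q + 1) = vol (yesState σ Q) q + vol (noState σ Q) q := by
  rw [vol_eq_sum, vol_eq_sum, vol_eq_sum, ← Finset.sum_add_distrib]
  refine Finset.sum_congr rfl fun y _ => ?_
  have h4 : (σ y : ℕ) ≤ 4 := Nat.lt_succ_iff.mp (σ y).isLt
  by_cases hy : y ∈ Q
  · have hyes : ((yesState σ Q y : Fin 5) : ℕ) = (σ y : ℕ) := by
      simp [yesState, hy, Nat.min_eq_left h4]
    have hno : ((noState σ Q y : Fin 5) : ℕ) = min ((σ y : ℕ) + 1) 4 := by
      simp [noState, hy]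
    rw [hyes, hno, wt_key _ _ h4]; omega
  · have hyes : ((yesState σ Q y : Fin 5) : ℕ) = min ((σ y : ℕ) + 1) 4 := by
      simp [yesState, hy]
    have hno : ((noState σ Q y : Fin 5) : ℕ) = (σ y : ℕ) := by
      simp [noState, hy, Nat.min_eq_left h4]
    rw [hyes, hno, wt_key _ _ h4]

lemma vol_le_of_final {σ : State u} (h : IsFinal σ) : vol σ 0 ≤ 1 := by
  rw [vol_eq_sum]
  have : ∀ y : Fin u, wt (σ y : ℕ) 0 = if (σ y : ℕ) ≤ 3 then 1 else 0 := by
    intro y; unfold wt; split <;> simp [binSum_zero]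
  simp only [this, ← Finset.sum_filter]
  rw [Finset.sum_const, smul_eq_mul, mul_one]
  refine Finset.card_le_one.mpr fun a ha b hb => ?_
  simp only [Finset.mem_filter] at ha hb
  exact h ha.2 hb.2

lemma vol_le_of_winning : ∀ q : ℕ, ∀ σ : State u, ∀ S : Strategy u,
    IsWinning σ S q → vol σ q ≤ 2 ^ q := by
  intro q
  induction q with
  | zero =>
    intro σ S hw
    simpa [play] using vol_le_of_final (hw [] rfl)
  | succ q ih =>
    intro σ S hw
    have hyes : IsWinning (yesState σ (S [])) (fun l => S (true :: l)) q := by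
      intro bs hbs
      exact hw (true :: bs) (by simp [hbs])
    have hno : IsWinning (noState σ (S [])) (fun l => S (false :: l)) q := by
      intro bs hbs
      exact hw (false :: bs) (by simp [hbs])
    have h1 := ih _ _ hyes
    have h2 := ih _ _ hno
    rw [vol_split σ (S []) q]
    calc vol (yesState σ (S [])) q + vol (noState σ (S [])) q
        ≤ 2 ^ q + 2 ^ q := Nat.add_le_add h1 h2
      _ = 2 ^ (q + 1) := by ring

/-- If `0 ≤ q < ch(σ)` then there is no winning strategy for `σ`
of size `q`, whatever subsets of `U` the questions are. -/
theorem no_winning_strategy_below_character (m : ℕ) (hm : 1 ≤ m)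
    (σ : State (2 ^ m)) (q : ℕ) (hq : q < ch σ) :
    ∀ S : Strategy (2 ^ m), ¬ IsWinning σ S q := by
  intro S hw
  have h := vol_le_of_winning q σ S hw
  have : ch σ ≤ q := Nat.sInf_le h
  omega

end UlamRenyi
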